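/- The grand potential per site of the one-transit walk model, ω(z₁,z₂) = -lim_{n→∞} (1/n) log Z_n(z₁,z₂), exists and equals: -log(4z₁z₂) for z₁,z₂ ≥ 1/2; -log z₂ + log(1-z₁) for z₁ < 1/2 and z₂ > z₁; and -log z₁ + log(1-z₂) for z₂ < 1/2 and z₁ > z₂. -/

import Mathlib

open Filter

/-- Ballot number B_{m,q}, with B_{0,0} = 1 and B_{m,q} = 0 for q > m. -/
noncomputable def Bq (m q : ℕ) : ℝ :=
  if m = 0 then (if q = 0 then 1 else 0)
  else if q ≤ m then
    (q : ℝ) * (2 * m - q - 1).factorial / ((m.factorial : ℝ) * (m - q).factorial)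
  else 0

/-- One-sided contact generating function Z̃_m(z) = ∑_q B_{m,q} z^{-q}. -/
noncomputable def Zt (m : ℕ) (z : ℝ) : ℝ := ∑ q ∈ Finset.range (m + 1), Bq m q * z⁻¹ ^ q

/-- One-transit walk model partition function Z_n(z₁,z₂). -/
noncomputable def Zfull (n : ℕ) (z₁ z₂ : ℝ) : ℝ :=
  (z₁ * z₂) ^ n * ∑ p ∈ Finset.range (n + 1), Zt p z₁ * Zt (n - p) z₂

/-!
`Zt m z` grows like `growthRate z ^ m` up to polynomial factors, so the convolution
`Zfull n z₁ z₂ / (z₁ z₂)^n` grows like `max (growthRate z₁) (growthRate z₂) ^ n`.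

Upper bound: `B_{m,q} ≤ C(2m-q, m)`, and `C(2m-q, m) (1-z)^m z^(m-q) ≤ 1` is a term of the binomial
expansion of `((1-z) + z)^(2m-q)`, giving `Zt m z ≤ (m+1) (z(1-z))^(-m)`; for `z ≥ 1/2` use that
`Zt m` is antitone. Lower bound: for `z ≥ 1/2` the single term `B_{m,1}`, a Catalan number, is at
least `4^m / (8m²)`. For `z < 1/2`, `C(2m-q, m) ≤ 2m B_{m,q}` gives
`2m z^m Zt m z ≥ ∑_{j<m} C(m+j, j) z^j`, a truncated negative binomial series, which is at least
`(1-z)^(-m) / 2` as soon as the complementary probability, at most `(m+1) (4z(1-z))^m`, is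
below `1/2`.
-/

open Finset Real Topology

lemma Bq_nonneg (m q : ℕ) : 0 ≤ Bq m q := by
  unfold Bq; split_ifs <;> positivity

lemma Bq_self (m : ℕ) : Bq m m = 1 := by
  rcases m with _ | m
  · simp [Bq]
  · have : 2 * (m + 1) - (m + 1) - 1 = m := by omega
    simp only [Bq, if_neg (Nat.succ_ne_zero m), le_refl, if_true, this, Nat.sub_self,
      Nat.factorial_zero, Nat.cast_one, mul_one, Nat.factorial_succ, Nat.cast_mul]
    field_simp

lemma sub_mul_Bq {m q : ℕ} (hq : q ≤ m) :
    ((2 * m - q : ℕ) : ℝ) * Bq m q = q * (2 * m - q).choose m := by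
  rcases Nat.eq_zero_or_pos m with rfl | hm
  · obtain rfl : q = 0 := by omega
    simp
  · have hsucc : 2 * m - q = (2 * m - q - 1) + 1 := by omega
    rw [Bq, if_neg hm.ne', if_pos hq, Nat.cast_choose ℝ (by omega : m ≤ 2 * m - q),
      show 2 * m - q - m = m - q by omega, hsucc, Nat.factorial_succ]
    push_cast
    field_simp

lemma Bq_le_choose {m q : ℕ} (hq : q ≤ m) : Bq m q ≤ (2 * m - q).choose m := by
  rcases Nat.eq_zero_or_pos m with rfl | hm
  · obtain rfl : q = 0 := by omega
    simp [Bq]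
  · have hBq := sub_mul_Bq hq
    have hqle : (q : ℝ) ≤ ((2 * m - q : ℕ) : ℝ) := by exact_mod_cast (by omega : q ≤ 2 * m - q)
    have hpos : (0 : ℝ) < ((2 * m - q : ℕ) : ℝ) := by exact_mod_cast (by omega : 0 < 2 * m - q)
    nlinarith [Bq_nonneg m q, (Nat.cast_nonneg ((2 * m - q).choose m) : (0 : ℝ) ≤ _)]

lemma choose_le_two_mul_mul_Bq {m q : ℕ} (h1q : 1 ≤ q) (hq : q ≤ m) :
    ((2 * m - q).choose m : ℝ) ≤ 2 * m * Bq m q := by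
  have hBq := sub_mul_Bq hq
  have h1 : (1 : ℝ) ≤ q := by exact_mod_cast h1q
  have h2 : ((2 * m - q : ℕ) : ℝ) ≤ 2 * m := by exact_mod_cast (by omega : 2 * m - q ≤ 2 * m)
  nlinarith [Bq_nonneg m q, (Nat.cast_nonneg ((2 * m - q).choose m) : (0 : ℝ) ≤ _)]

lemma Bq_succ_one (k : ℕ) : Bq (k + 1) 1 = catalan k := by
  have hcat : ((k + 1 : ℕ) : ℝ) * catalan k = (2 * k).choose k := by
    exact_mod_cast (succ_mul_catalan_eq_centralBinom k).trans (Nat.centralBinom_eq_two_mul_choose k)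
  have hB : ((k + 1 : ℕ) : ℝ) * Bq (k + 1) 1 = (2 * k).choose k := by
    rw [Bq, if_neg (Nat.succ_ne_zero k), if_pos (by omega),
      Nat.cast_choose ℝ (by omega : k ≤ 2 * k),
      show 2 * (k + 1) - 1 - 1 = 2 * k by omega, show 2 * k - k = k by omega,
      show k + 1 - 1 = k by omega, Nat.factorial_succ]
    push_cast
    field_simp
  exact mul_left_cancel₀ (by positivity) (hB.trans hcat.symm)

lemma four_pow_le_Bq_one {m : ℕ} (hm : 1 ≤ m) : (4 : ℝ) ^ m ≤ 8 * m ^ 2 * Bq m 1 := by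
  obtain ⟨k, rfl⟩ : ∃ k, m = k + 1 := ⟨m - 1, by omega⟩
  have hcentral : (4 : ℝ) ^ k ≤ (2 * k + 1) * ((k + 1) * Bq (k + 1) 1) := by
    rw [Bq_succ_one]
    exact_mod_cast (Nat.four_pow_le_two_mul_add_one_mul_central_binom k).trans_eq
      (by rw [succ_mul_catalan_eq_centralBinom, Nat.centralBinom_eq_two_mul_choose])
  have hB := Bq_nonneg (k + 1) 1
  push_cast
  calc (4 : ℝ) ^ (k + 1) = 4 * 4 ^ k := pow_succ' 4 k
    _ ≤ 4 * ((2 * k + 1) * ((k + 1) * Bq (k + 1) 1)) := by gcongr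
    _ ≤ 8 * (k + 1) ^ 2 * Bq (k + 1) 1 := by nlinarith

lemma Bq_mul_inv_pow_le_Zt {m q : ℕ} (hq : q ≤ m) {z : ℝ} (hz : 0 < z) :
    Bq m q * z⁻¹ ^ q ≤ Zt m z :=
  single_le_sum (f := fun q => Bq m q * z⁻¹ ^ q)
    (fun i _ => mul_nonneg (Bq_nonneg m i) (by positivity)) (mem_range.2 (Nat.lt_succ_of_le hq))

lemma Zt_zero (z : ℝ) : Zt 0 z = 1 := by
  simp [Zt, Bq]

lemma Zt_nonneg (m : ℕ) {z : ℝ} (hz : 0 < z) : 0 ≤ Zt m z :=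
  sum_nonneg fun q _ => mul_nonneg (Bq_nonneg m q) (by positivity)

lemma Zt_pos (m : ℕ) {z : ℝ} (hz : 0 < z) : 0 < Zt m z :=
  (by positivity : 0 < z⁻¹ ^ m).trans_le
    (by simpa [Bq_self] using Bq_mul_inv_pow_le_Zt le_rfl hz)

lemma Zt_anti (m : ℕ) {z z' : ℝ} (hz : 0 < z) (hzz' : z ≤ z') : Zt m z' ≤ Zt m z :=
  sum_le_sum fun q _ => mul_le_mul_of_nonneg_left
    (pow_le_pow_left₀ (inv_nonneg.2 (hz.le.trans hzz')) (inv_anti₀ hz hzz') q) (Bq_nonneg m q)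

lemma choose_mul_pow_mul_pow_le_one {x y : ℝ} (hx : 0 ≤ x) (hy : 0 ≤ y) (hxy : x + y = 1)
    {n k : ℕ} (hk : k ≤ n) : (n.choose k : ℝ) * x ^ k * y ^ (n - k) ≤ 1 := by
  calc (n.choose k : ℝ) * x ^ k * y ^ (n - k) = x ^ k * y ^ (n - k) * n.choose k := by ring
    _ ≤ ∑ i ∈ range (n + 1), x ^ i * y ^ (n - i) * n.choose i :=
      single_le_sum (f := fun i => x ^ i * y ^ (n - i) * n.choose i)
        (fun i _ => by positivity) (mem_range.2 (Nat.lt_succ_of_le hk))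
    _ = 1 := by rw [← add_pow, hxy, one_pow]

lemma Zt_le_of_lt_one (m : ℕ) {z : ℝ} (hz : 0 < z) (hz1 : z < 1) :
    Zt m z ≤ (m + 1) * (z * (1 - z))⁻¹ ^ m := by
  have hterm : ∀ q ∈ range (m + 1), Bq m q * z⁻¹ ^ q ≤ (z * (1 - z))⁻¹ ^ m := by
    intro q hq
    have hqm : q ≤ m := Nat.lt_succ_iff.1 (mem_range.1 hq)
    have hbinom := choose_mul_pow_mul_pow_le_one (by linarith) hz.le (sub_add_cancel 1 z)
      (by omega : m ≤ 2 * m - q)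
    rw [show 2 * m - q - m = m - q by omega] at hbinom
    have hsplit : z⁻¹ ^ q = (z * (1 - z))⁻¹ ^ m * ((1 - z) ^ m * z ^ (m - q)) := by
      have hzz : z * (1 - z) ≠ 0 := mul_ne_zero hz.ne' (by linarith)
      rw [pow_sub₀ _ hz.ne' hqm, ← inv_pow, show (1 - z) ^ m * (z ^ m * z⁻¹ ^ q)
        = (z * (1 - z)) ^ m * z⁻¹ ^ q by rw [mul_pow]; ring, ← mul_assoc, ← mul_pow,
        inv_mul_cancel₀ hzz, one_pow, one_mul]
    calc Bq m q * z⁻¹ ^ q ≤ (2 * m - q).choose m * z⁻¹ ^ q := by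
          gcongr; exact Bq_le_choose hqm
      _ = (z * (1 - z))⁻¹ ^ m * ((2 * m - q).choose m * (1 - z) ^ m * z ^ (m - q)) := by
          rw [hsplit]; ring
      _ ≤ (z * (1 - z))⁻¹ ^ m := mul_le_of_le_one_right (by positivity) hbinom
  calc Zt m z ≤ ∑ _q ∈ range (m + 1), (z * (1 - z))⁻¹ ^ m := sum_le_sum hterm
    _ = (m + 1) * (z * (1 - z))⁻¹ ^ m := by simp

noncomputable def growthRate (z : ℝ) : ℝ := if z < 1 / 2 then (z * (1 - z))⁻¹ else 4

lemma growthRate_of_lt_half {z : ℝ} (hz : z < 1 / 2) : growthRate z = (z * (1 - z))⁻¹ :=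
  if_pos hz

lemma growthRate_of_half_le {z : ℝ} (hz : 1 / 2 ≤ z) : growthRate z = 4 :=
  if_neg hz.not_gt

lemma growthRate_pos {z : ℝ} (hz : 0 < z) : 0 < growthRate z := by
  unfold growthRate
  split_ifs with h
  · have : 0 < z * (1 - z) := by nlinarith
    positivity
  · norm_num

lemma growthRate_anti {z z' : ℝ} (hz : 0 < z) (hzz' : z ≤ z') : growthRate z' ≤ growthRate z := by
  unfold growthRate
  split_ifs with h' h h
  · exact inv_anti₀ (by nlinarith) (by nlinarith)
  · linarith
  · rw [le_inv_comm₀ (by norm_num) (by nlinarith)]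
    nlinarith [sq_nonneg (2 * z - 1)]
  · rfl

lemma Zt_le_growthRate (m : ℕ) {z : ℝ} (hz : 0 < z) : Zt m z ≤ (m + 1) * growthRate z ^ m := by
  unfold growthRate
  split_ifs with h
  · exact Zt_le_of_lt_one m hz (by linarith)
  · calc Zt m z ≤ Zt m (1 / 2) := Zt_anti m (by norm_num) (not_lt.1 h)
      _ ≤ (m + 1) * (1 / 2 * (1 - 1 / 2))⁻¹ ^ m := Zt_le_of_lt_one m (by norm_num) (by norm_num)
      _ = (m + 1) * 4 ^ m := by norm_num

/-- A partial sum of the series of `(1 - x)^(-(m+1))`. -/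
noncomputable def negBinomSum (x : ℝ) (K m : ℕ) : ℝ :=
  ∑ j ∈ range (K + 1), ((m + j).choose j : ℝ) * x ^ j

lemma negBinomSum_nonneg {x : ℝ} (hx : 0 ≤ x) (K m : ℕ) : 0 ≤ negBinomSum x K m :=
  sum_nonneg fun _ _ => by positivity

lemma negBinomSum_zero_left (x : ℝ) (m : ℕ) : negBinomSum x 0 m = 1 := by
  simp [negBinomSum]

lemma negBinomSum_zero_right (x : ℝ) (K : ℕ) : negBinomSum x K 0 = ∑ j ∈ range (K + 1), x ^ j := by
  simp [negBinomSum]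

lemma negBinomSum_succ_succ (x : ℝ) (K m : ℕ) :
    negBinomSum x (K + 1) (m + 1) = negBinomSum x (K + 1) m + x * negBinomSum x K (m + 1) := by
  unfold negBinomSum
  rw [mul_sum, sum_range_succ' (fun j => ((m + 1 + j).choose j : ℝ) * x ^ j),
    sum_range_succ' (fun j => ((m + j).choose j : ℝ) * x ^ j)]
  simp only [Nat.choose_zero_right, pow_zero, Nat.cast_one, mul_one, add_zero]
  rw [add_right_comm, add_left_inj, ← sum_add_distrib]
  refine sum_congr rfl fun j _ => ?_
  rw [show m + 1 + (j + 1) = (m + (j + 1)) + 1 by omega, Nat.choose_succ_succ',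
    show m + (j + 1) = m + 1 + j by omega]
  push_cast
  ring

/-- In Bernoulli trials with success probability `y`, the two terms are the probabilities that
`m + 1` successes come before `K + 1` failures and vice versa. -/
lemma pow_mul_negBinomSum_add_pow_mul_negBinomSum {x y : ℝ} (hxy : x + y = 1) (K m : ℕ) :
    y ^ (m + 1) * negBinomSum x K m + x ^ (K + 1) * negBinomSum y m K = 1 := by
  induction K generalizing m with
  | zero =>
    rw [negBinomSum_zero_left, negBinomSum_zero_right, mul_one, pow_one, ← eq_sub_iff_add_eq',
      ← mul_neg_geom_sum, ← hxy, add_sub_cancel_right]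
  | succ K ihK =>
    induction m with
    | zero =>
      rw [negBinomSum_zero_left, negBinomSum_zero_right, mul_one, pow_one, ← eq_sub_iff_add_eq,
        ← mul_neg_geom_sum, ← hxy, add_sub_cancel_left]
    | succ m ihm =>
      rw [negBinomSum_succ_succ x K m, negBinomSum_succ_succ y m K]
      linear_combination y * ihm + x * ihK (m + 1) + hxy

lemma inv_pow_mul_negBinomSum_le_Zt {z : ℝ} (hz : 0 < z) (k : ℕ) :
    z⁻¹ ^ (k + 1) * negBinomSum z k (k + 1) ≤ 2 * (k + 1) * Zt (k + 1) z := by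
  set m := k + 1
  have hterm : ∀ j ∈ range m, z⁻¹ ^ m * (((m + j).choose j : ℝ) * z ^ j)
      ≤ 2 * m * Bq m (m - j) * z⁻¹ ^ (m - j) := by
    intro j hj
    have hjm : j < m := mem_range.1 hj
    have hchoose : (m + j).choose j = (2 * m - (m - j)).choose m := by
      rw [show 2 * m - (m - j) = m + j by omega, Nat.choose_symm_add]
    have hpow : z⁻¹ ^ m * z ^ j = z⁻¹ ^ (m - j) := by
      rw [pow_sub₀ z⁻¹ (inv_ne_zero hz.ne') hjm.le, inv_pow z j, inv_inv]
    calc z⁻¹ ^ m * (((m + j).choose j : ℝ) * z ^ j)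
        = (2 * m - (m - j)).choose m * z⁻¹ ^ (m - j) := by rw [← hpow, hchoose]; ring
      _ ≤ 2 * m * Bq m (m - j) * z⁻¹ ^ (m - j) := by
        gcongr
        exact choose_le_two_mul_mul_Bq (by omega) (by omega)
  calc z⁻¹ ^ m * negBinomSum z k m
      ≤ ∑ j ∈ range m, 2 * m * Bq m (m - j) * z⁻¹ ^ (m - j) := by
        rw [negBinomSum, mul_sum]; exact sum_le_sum hterm
    _ ≤ ∑ j ∈ range (m + 1), 2 * m * Bq m (m - j) * z⁻¹ ^ (m - j) := by
        rw [sum_range_succ _ m]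
        exact le_add_of_nonneg_right
          (mul_nonneg (mul_nonneg (by positivity) (Bq_nonneg _ _)) (by positivity))
    _ = 2 * m * Zt m z := by
        rw [Zt, mul_sum, ← sum_range_reflect]
        refine sum_congr rfl fun j hj => ?_
        rw [show m + 1 - 1 - j = m - j by omega,
          Nat.sub_sub_self (Nat.lt_succ_iff.1 (mem_range.1 hj))]
        ring
    _ = 2 * (k + 1) * Zt (k + 1) z := by simp [m]

lemma pow_mul_negBinomSum_one_sub_le {z : ℝ} (hz : 0 ≤ z) (hz2 : z ≤ 1 / 2) (k : ℕ) :
    z ^ (k + 1) * negBinomSum (1 - z) (k + 1) k ≤ (k + 2) * (4 * z * (1 - z)) ^ (k + 1) := by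
  have hterm : ∀ j ∈ range (k + 2), ((k + j).choose j : ℝ) * (1 - z) ^ j
      ≤ 2 ^ (k + 1) * (2 * (1 - z)) ^ (k + 1) := by
    intro j hj
    have hj : j ≤ k + 1 := Nat.lt_succ_iff.1 (mem_range.1 hj)
    calc ((k + j).choose j : ℝ) * (1 - z) ^ j ≤ 2 ^ (k + j) * (1 - z) ^ j := by
          gcongr
          · exact pow_nonneg (by linarith) j
          · exact_mod_cast Nat.choose_le_two_pow (k + j) j
      _ = 2 ^ k * (2 * (1 - z)) ^ j := by rw [pow_add, mul_pow]; ring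
      _ ≤ 2 ^ (k + 1) * (2 * (1 - z)) ^ (k + 1) :=
          mul_le_mul (pow_le_pow_right₀ one_le_two k.le_succ)
            (pow_le_pow_right₀ (by linarith) hj) (pow_nonneg (by linarith) j) (by positivity)
  calc z ^ (k + 1) * negBinomSum (1 - z) (k + 1) k
      ≤ z ^ (k + 1) * ∑ _j ∈ range (k + 2), 2 ^ (k + 1) * (2 * (1 - z)) ^ (k + 1) := by
        gcongr; exact sum_le_sum hterm
    _ = (k + 2) * (4 * z * (1 - z)) ^ (k + 1) := by
        have : (4 * z * (1 - z)) ^ (k + 1)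
            = z ^ (k + 1) * (2 ^ (k + 1) * (2 * (1 - z)) ^ (k + 1)) := by
          rw [← mul_pow, ← mul_pow]; ring_nf
        rw [sum_const, card_range, nsmul_eq_mul, this]
        push_cast
        ring

lemma eventually_inv_mul_one_sub_pow_le_Zt {z : ℝ} (hz : 0 < z) (hz2 : z < 1 / 2) :
    ∀ᶠ m : ℕ in atTop, (z * (1 - z))⁻¹ ^ m ≤ 4 * m * Zt m z := by
  have hr : |4 * z * (1 - z)| < 1 := by
    rw [abs_of_pos (by nlinarith)]
    nlinarith
  have htail : Tendsto (fun m : ℕ => ((m : ℝ) + 1) * (4 * z * (1 - z)) ^ m) atTop (𝓝 0) := by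
    simpa [add_mul] using (tendsto_pow_const_mul_const_pow_of_abs_lt_one 1 hr).add
      (tendsto_pow_atTop_nhds_zero_of_abs_lt_one hr)
  filter_upwards [htail.eventually_le_const (by norm_num : (0 : ℝ) < 1 / 2),
    eventually_ge_atTop 1] with m hsmall hm
  obtain ⟨k, rfl⟩ : ∃ k, m = k + 1 := ⟨m - 1, by omega⟩
  have hidentity := pow_mul_negBinomSum_add_pow_mul_negBinomSum (add_sub_cancel z 1) k (k + 1)
  have htail_le := pow_mul_negBinomSum_one_sub_le hz.le hz2.le k
  have hS := negBinomSum_nonneg hz.le k (k + 1)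
  push_cast at hsmall
  have hhalf : 1 / 2 ≤ (1 - z) ^ (k + 1) * negBinomSum z k (k + 1) := by
    have : (1 - z) ^ (k + 1 + 1) ≤ (1 - z) ^ (k + 1) :=
      pow_le_pow_of_le_one (by linarith) (by linarith) (Nat.le_succ _)
    nlinarith
  have h1z : 0 < 1 - z := by linarith
  calc (z * (1 - z))⁻¹ ^ (k + 1) = z⁻¹ ^ (k + 1) * ((1 - z) ^ (k + 1))⁻¹ := by
        rw [mul_inv, mul_pow, inv_pow (1 - z)]
    _ ≤ z⁻¹ ^ (k + 1) * (2 * negBinomSum z k (k + 1)) := by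
        gcongr
        rw [inv_le_iff_one_le_mul₀ (by positivity)]
        linarith
    _ ≤ 4 * (k + 1 : ℕ) * Zt (k + 1) z := by
        push_cast
        linarith [inv_pow_mul_negBinomSum_le_Zt hz k]

lemma exists_growthRate_pow_le {z : ℝ} (hz : 0 < z) :
    ∃ C > 0, ∀ᶠ m : ℕ in atTop, growthRate z ^ m ≤ C * (m + 1) ^ 2 * Zt m z := by
  unfold growthRate
  split_ifs with h
  · refine ⟨4, by norm_num, ?_⟩
    filter_upwards [eventually_inv_mul_one_sub_pow_le_Zt hz h] with m hm
    have hm' : (m : ℝ) ≤ (m + 1) ^ 2 := by nlinarith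
    calc (z * (1 - z))⁻¹ ^ m ≤ 4 * m * Zt m z := hm
      _ ≤ 4 * (m + 1) ^ 2 * Zt m z := by gcongr; exact Zt_nonneg m hz
  · refine ⟨8 * z, by positivity, ?_⟩
    filter_upwards [eventually_ge_atTop 1] with m hm
    have hB := Bq_mul_inv_pow_le_Zt hm hz
    rw [pow_one] at hB
    calc (4 : ℝ) ^ m ≤ 8 * m ^ 2 * Bq m 1 := four_pow_le_Bq_one hm
      _ = 8 * z * m ^ 2 * (Bq m 1 * z⁻¹) := by field_simp
      _ ≤ 8 * z * (m + 1) ^ 2 * Zt m z := by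
        gcongr
        · exact mul_nonneg (Bq_nonneg m 1) (by positivity)
        · linarith

noncomputable def Zconv (n : ℕ) (z₁ z₂ : ℝ) : ℝ :=
  ∑ p ∈ range (n + 1), Zt p z₁ * Zt (n - p) z₂

lemma Zconv_comm (n : ℕ) (z₁ z₂ : ℝ) : Zconv n z₁ z₂ = Zconv n z₂ z₁ := by
  rw [Zconv, ← sum_range_reflect]
  refine sum_congr rfl fun p hp => ?_
  rw [show n + 1 - 1 - p = n - p by omega, Nat.sub_sub_self (Nat.lt_succ_iff.1 (mem_range.1 hp)),
    mul_comm]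

lemma Zt_le_Zconv (n : ℕ) {z₁ z₂ : ℝ} (h1 : 0 < z₁) (h2 : 0 < z₂) : Zt n z₁ ≤ Zconv n z₁ z₂ := by
  simpa only [Zconv, Nat.sub_self, Zt_zero, mul_one] using
    single_le_sum (f := fun p => Zt p z₁ * Zt (n - p) z₂)
    (fun p _ => mul_nonneg (Zt_nonneg p h1) (Zt_nonneg _ h2)) (self_mem_range_succ n)

lemma Zconv_le {z₁ z₂ Λ : ℝ} (h2 : 0 < z₂) (hΛ : 0 ≤ Λ)
    (hU1 : ∀ m, Zt m z₁ ≤ (m + 1) * Λ ^ m) (hU2 : ∀ m, Zt m z₂ ≤ (m + 1) * Λ ^ m) (n : ℕ) :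
    Zconv n z₁ z₂ ≤ (n + 1) ^ 3 * Λ ^ n := by
  have hterm : ∀ p ∈ range (n + 1), Zt p z₁ * Zt (n - p) z₂ ≤ (n + 1) ^ 2 * Λ ^ n := by
    intro p hp
    have hpn : p ≤ n := Nat.lt_succ_iff.1 (mem_range.1 hp)
    have hp' : (p : ℝ) + 1 ≤ n + 1 := by gcongr
    have hnp : ((n - p : ℕ) : ℝ) + 1 ≤ n + 1 := by gcongr; exact Nat.sub_le n p
    calc Zt p z₁ * Zt (n - p) z₂ ≤ ((p + 1) * Λ ^ p) * (((n - p : ℕ) + 1) * Λ ^ (n - p)) :=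
          mul_le_mul (hU1 p) (hU2 _) (Zt_nonneg _ h2) (by positivity)
      _ = ((p + 1) * ((n - p : ℕ) + 1)) * Λ ^ n := by
          rw [← Nat.add_sub_of_le hpn, Nat.add_sub_cancel_left, pow_add]; ring
      _ ≤ ((n + 1) * (n + 1)) * Λ ^ n := by gcongr
      _ = (n + 1) ^ 2 * Λ ^ n := by ring
  calc Zconv n z₁ z₂ ≤ ∑ _p ∈ range (n + 1), ((n : ℝ) + 1) ^ 2 * Λ ^ n := sum_le_sum hterm
    _ = (n + 1) ^ 3 * Λ ^ n := by simp; ring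

lemma tendsto_log_mul_pow_div {C : ℝ} (hC : 0 < C) (k : ℕ) :
    Tendsto (fun n : ℕ => log (C * (n + 1) ^ k) / n) atTop (𝓝 0) := by
  have hlog : Tendsto (fun n : ℕ => log ((n : ℝ) + 1) / n) atTop (𝓝 0) := by
    refine ((tendsto_pow_log_div_mul_add_atTop 1 (-1) 1 one_ne_zero).comp
      (tendsto_atTop_add_const_right atTop 1 tendsto_natCast_atTop_atTop)).congr fun n => ?_
    simp
  have hconst : Tendsto (fun n : ℕ => log C / n) atTop (𝓝 0) :=
    tendsto_const_nhds.div_atTop tendsto_natCast_atTop_atTop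
  have hsum : Tendsto (fun n : ℕ => log C / n + k * (log (n + 1) / n)) atTop (𝓝 0) := by
    simpa using hconst.add (hlog.const_mul (k : ℝ))
  refine hsum.congr fun n => ?_
  rw [log_mul hC.ne' (by positivity), log_pow]
  ring

lemma tendsto_log_div_of_le_of_le {a p q : ℕ → ℝ} {Λ : ℝ} (hΛ : 0 < Λ)
    (hp : ∀ n, 0 < p n) (hq : ∀ n, 0 < q n)
    (hp_lim : Tendsto (fun n => log (p n) / n) atTop (𝓝 0))
    (hq_lim : Tendsto (fun n => log (q n) / n) atTop (𝓝 0))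
    (hlow : ∀ᶠ n in atTop, Λ ^ n ≤ p n * a n) (hup : ∀ᶠ n in atTop, a n ≤ q n * Λ ^ n) :
    Tendsto (fun n => log (a n) / n) atTop (𝓝 (log Λ)) := by
  refine tendsto_of_tendsto_of_tendsto_of_le_of_le' (by simpa using tendsto_const_nhds.sub hp_lim)
    (by simpa using tendsto_const_nhds.add hq_lim) ?_ ?_
  all_goals filter_upwards [hlow, hup, eventually_gt_atTop 0] with n hlow hup hn
  all_goals
    have ha : 0 < a n := pos_of_mul_pos_right ((pow_pos hΛ n).trans_le hlow) (hp n).le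
    have hn' : (0 : ℝ) < n := by exact_mod_cast hn
    rw [← sub_nonneg]
  · have := log_le_log (pow_pos hΛ n) hlow
    rw [log_mul (hp n).ne' ha.ne', log_pow] at this
    field_simp
    linarith
  · have := log_le_log ha hup
    rw [log_mul (hq n).ne' (pow_pos hΛ n).ne', log_pow] at this
    field_simp
    linarith

lemma tendsto_log_Zconv_div {z₁ z₂ : ℝ} (h1 : 0 < z₁) (h2 : 0 < z₂) :
    Tendsto (fun n : ℕ => log (Zconv n z₁ z₂) / n) atTop
      (𝓝 (log (max (growthRate z₁) (growthRate z₂)))) := by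
  set Λ := max (growthRate z₁) (growthRate z₂)
  have hΛ : 0 < Λ := (growthRate_pos h1).trans_le (le_max_left _ _)
  have hU : ∀ {z}, 0 < z → growthRate z ≤ Λ → ∀ m : ℕ, Zt m z ≤ (m + 1) * Λ ^ m :=
    fun hz hle m => (Zt_le_growthRate m hz).trans (by gcongr; exact (growthRate_pos hz).le)
  obtain ⟨C, hC, hlow⟩ : ∃ C > 0, ∀ᶠ n : ℕ in atTop, Λ ^ n ≤ C * (n + 1) ^ 2 * Zconv n z₁ z₂ := by
    rcases max_choice (growthRate z₁) (growthRate z₂) with h | h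
    · obtain ⟨C, hC, hev⟩ := exists_growthRate_pow_le h1
      refine ⟨C, hC, hev.mono fun n hn => ?_⟩
      rw [show Λ = _ from h]
      exact hn.trans (by gcongr; exact Zt_le_Zconv n h1 h2)
    · obtain ⟨C, hC, hev⟩ := exists_growthRate_pow_le h2
      refine ⟨C, hC, hev.mono fun n hn => ?_⟩
      rw [show Λ = _ from h, Zconv_comm]
      exact hn.trans (by gcongr; exact Zt_le_Zconv n h2 h1)
  exact tendsto_log_div_of_le_of_le hΛ (fun n => by positivity) (fun n => by positivity)
    (tendsto_log_mul_pow_div hC 2) (tendsto_log_mul_pow_div one_pos 3) hlow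
    (Eventually.of_forall fun n => by
      simpa using Zconv_le h2 hΛ.le (hU h1 (le_max_left _ _)) (hU h2 (le_max_right _ _)) n)

lemma tendsto_neg_log_Zfull {z₁ z₂ : ℝ} (h1 : 0 < z₁) (h2 : 0 < z₂) :
    Tendsto (fun n : ℕ => -(1 / (n : ℝ)) * log (Zfull n z₁ z₂)) atTop
      (𝓝 (-log (z₁ * z₂ * max (growthRate z₁) (growthRate z₂)))) := by
  have hΛ : 0 < max (growthRate z₁) (growthRate z₂) :=
    (growthRate_pos h1).trans_le (le_max_left _ _)
  rw [log_mul (by positivity) hΛ.ne', neg_add]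
  refine ((tendsto_log_Zconv_div h1 h2).neg.const_add _).congr' ?_
  filter_upwards [eventually_gt_atTop 0] with n hn
  have hZ : 0 < Zconv n z₁ z₂ := (Zt_pos n h1).trans_le (Zt_le_Zconv n h1 h2)
  rw [show Zfull n z₁ z₂ = (z₁ * z₂) ^ n * Zconv n z₁ z₂ from rfl,
    log_mul (by positivity) hZ.ne', log_pow]
  field_simp
  ring

lemma Zfull_comm (n : ℕ) (z₁ z₂ : ℝ) : Zfull n z₁ z₂ = Zfull n z₂ z₁ := by
  change (z₁ * z₂) ^ n * Zconv n z₁ z₂ = (z₂ * z₁) ^ n * Zconv n z₂ z₁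
  rw [mul_comm z₁, Zconv_comm]

lemma tendsto_neg_log_Zfull_of_half_le {z₁ z₂ : ℝ} (hz₁ : 1 / 2 ≤ z₁) (hz₂ : 1 / 2 ≤ z₂) :
    Tendsto (fun n : ℕ => -(1 / (n : ℝ)) * log (Zfull n z₁ z₂)) atTop
      (𝓝 (-log (4 * z₁ * z₂))) := by
  have h := tendsto_neg_log_Zfull (show 0 < z₁ by linarith) (show 0 < z₂ by linarith)
  rw [growthRate_of_half_le hz₁, growthRate_of_half_le hz₂, max_self] at h
  convert h using 4
  ring

lemma tendsto_neg_log_Zfull_of_lt_half {z₁ z₂ : ℝ} (h1 : 0 < z₁) (hz₁ : z₁ < 1 / 2)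
    (hz₁₂ : z₁ < z₂) :
    Tendsto (fun n : ℕ => -(1 / (n : ℝ)) * log (Zfull n z₁ z₂)) atTop
      (𝓝 (-log z₂ + log (1 - z₁))) := by
  have h2 : 0 < z₂ := h1.trans hz₁₂
  have h := tendsto_neg_log_Zfull h1 h2
  rw [max_eq_left (growthRate_anti h1 hz₁₂.le), growthRate_of_lt_half hz₁] at h
  convert h using 2
  rw [show z₁ * z₂ * (z₁ * (1 - z₁))⁻¹ = z₂ / (1 - z₁) by field_simp,
    log_div h2.ne' (by linarith)]
  ring

/-- The grand potential per site ω = -lim (1/n) log Zₙ exists and takes its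
piecewise value in the three regions of the phase diagram. -/
theorem grand_potential (z₁ z₂ : ℝ) (h1 : 0 < z₁) (h2 : 0 < z₂) :
    (1 / 2 ≤ z₁ → 1 / 2 ≤ z₂ →
      Tendsto (fun n : ℕ => -(1 / (n : ℝ)) * Real.log (Zfull n z₁ z₂)) atTop
        (nhds (-Real.log (4 * z₁ * z₂)))) ∧
    (z₁ < 1 / 2 → z₁ < z₂ →
      Tendsto (fun n : ℕ => -(1 / (n : ℝ)) * Real.log (Zfull n z₁ z₂)) atTop
        (nhds (-Real.log z₂ + Real.log (1 - z₁)))) ∧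
    (z₂ < 1 / 2 → z₂ < z₁ →
      Tendsto (fun n : ℕ => -(1 / (n : ℝ)) * Real.log (Zfull n z₁ z₂)) atTop
        (nhds (-Real.log z₁ + Real.log (1 - z₂)))) :=
  ⟨tendsto_neg_log_Zfull_of_half_le, tendsto_neg_log_Zfull_of_lt_half h1,
    fun hz₂ hz₂₁ => (tendsto_neg_log_Zfull_of_lt_half h2 hz₂ hz₂₁).congr fun n => by
      rw [Zfull_comm]⟩
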